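/- arXiv:1202.4655 — 5 statements merged into one kernel-verified Lean document; each statement's English description precedes it below -/
import Mathlib

section
/- Let S be a finite nonempty set of positive integers with k = max S ∈ S, and define G_s : ℕ → ℤ by G_s(0) = 0 and G_s(n) = max_{j ∈ S, j ≤ n} (j - G_s(n - j)) for n > 0 (G_s(n) = 0 if no such j exists). Then for every r with 0 ≤ r ≤ k and every i ∈ ℕ, G_s(r + 2ik) ≤ r. -/
/-!
Call `r + 2ik` with `0 ≤ r ≤ k` an even position and `s + (2i+1)k` with `0 ≤ s ≤ k` an odd one.
By induction on `i`, `G(r + 2ik) ≤ r` and `G(s + (2i+1)k) ≥ k - s`. The odd bound comes from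
removing `k` beans, which leads to the even position `s + 2ik`. At an even position, a move
`j ≤ r` scores at most `j ≤ r` because `G ≥ 0`, while a move `j > r` leads to the odd position
`(r + k - j) + (2i - 1)k`, where the opponent nets at least `j - r`.
-/

open Finset

structure IsOptimalNetScore (S : Finset ℕ) (G : ℕ → ℤ) : Prop where
  map_zero : G 0 = 0
  eq_sup' : ∀ n : ℕ, 0 < n →
    G n = if h : (S.filter (fun j => j ≤ n)).Nonempty
      then (S.filter (fun j => j ≤ n)).sup' h (fun j => (j : ℤ) - G (n - j))
      else 0

namespace IsOptimalNetScore

variable {S : Finset ℕ} {G : ℕ → ℤ}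

theorem le_of_forall_move_le (hG : IsOptimalNetScore S G) {n : ℕ} {b : ℤ} (hb : 0 ≤ b)
    (h : ∀ j ∈ S, j ≤ n → (j : ℤ) - G (n - j) ≤ b) : G n ≤ b := by
  rcases Nat.eq_zero_or_pos n with rfl | hn
  · rw [hG.map_zero]; exact hb
  rw [hG.eq_sup' n hn]
  split_ifs
  · exact sup'_le _ _ fun j hj => h j (mem_filter.mp hj).1 (mem_filter.mp hj).2
  · exact hb

theorem move_le (hG : IsOptimalNetScore S G) {n j : ℕ} (hj : j ∈ S) (hjn : j ≤ n) :
    (j : ℤ) - G (n - j) ≤ G n := by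
  rcases Nat.eq_zero_or_pos n with rfl | hn
  · simp [Nat.le_zero.mp hjn, hG.map_zero]
  have hmem : j ∈ S.filter (fun j => j ≤ n) := mem_filter.mpr ⟨hj, hjn⟩
  rw [hG.eq_sup' n hn, dif_pos ⟨j, hmem⟩]
  exact le_sup' (fun j : ℕ => (j : ℤ) - G (n - j)) hmem

/-- The upper bound by the largest available move is what makes the induction for `0 ≤ G n` go
through: playing that largest move `j₀` leaves the opponent at most `j₀`. -/
theorem nonneg_and_le_sup (hG : IsOptimalNetScore S G) (hpos : ∀ j ∈ S, 0 < j) (n : ℕ) :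
    0 ≤ G n ∧ G n ≤ ((S.filter (fun j => j ≤ n)).sup id : ℕ) := by
  induction n using Nat.strong_induction_on with
  | _ n ih =>
  refine ⟨?_, hG.le_of_forall_move_le (Nat.cast_nonneg _) fun j hj hjn => ?_⟩
  · rcases Nat.eq_zero_or_pos n with rfl | hn
    · exact hG.map_zero.ge
    by_cases hf : (S.filter (fun j => j ≤ n)).Nonempty
    · obtain ⟨j₀, hj₀, hsup⟩ := exists_mem_eq_sup _ hf id
      obtain ⟨hj₀S, hj₀n⟩ := mem_filter.mp hj₀
      have hopp : G (n - j₀) ≤ j₀ := by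
        refine (ih _ (Nat.sub_lt hn (hpos j₀ hj₀S))).2.trans ?_
        rw [show (j₀ : ℤ) = ((S.filter (fun j => j ≤ n)).sup id : ℕ) from congrArg _ hsup.symm]
        exact_mod_cast sup_mono <| monotone_filter_right S fun j _ (hj : j ≤ n - j₀) =>
          hj.trans (Nat.sub_le n j₀)
      linarith [hG.move_le hj₀S hj₀n]
    · rw [hG.eq_sup' n hn, dif_neg hf]
  · have hopp := (ih _ (Nat.sub_lt ((hpos j hj).trans_le hjn) (hpos j hj))).1
    have hj : j ≤ (S.filter (fun j => j ≤ n)).sup id := le_sup (f := id) (mem_filter.mpr ⟨hj, hjn⟩)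
    linarith [(Nat.cast_le (α := ℤ)).mpr hj]

theorem nonneg (hG : IsOptimalNetScore S G) (hpos : ∀ j ∈ S, 0 < j) (n : ℕ) : 0 ≤ G n :=
  (hG.nonneg_and_le_sup hpos n).1

theorem apply_add_two_mul_mul_le (hG : IsOptimalNetScore S G) (hpos : ∀ j ∈ S, 0 < j)
    {k : ℕ} (hkS : k ∈ S) (hmax : ∀ j ∈ S, j ≤ k) (i : ℕ) :
    ∀ r ≤ k, G (r + 2 * i * k) ≤ r := by
  induction i with
  | zero =>
    intro r _
    refine hG.le_of_forall_move_le (Nat.cast_nonneg r) fun j _ hjr => ?_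
    linarith [hG.nonneg hpos (r + 2 * 0 * k - j), (Nat.cast_le (α := ℤ)).mpr hjr]
  | succ i ih =>
    intro r hr
    refine hG.le_of_forall_move_le (Nat.cast_nonneg r) fun j hj hjn => ?_
    by_cases hjr : j ≤ r
    · linarith [hG.nonneg hpos (r + 2 * (i + 1) * k - j), (Nat.cast_le (α := ℤ)).mpr hjr]
    have hjk := hmax j hj
    have hodd : r + 2 * (i + 1) * k - j = (r + k - j) + 2 * i * k + k := by
      rw [show 2 * (i + 1) * k = 2 * i * k + k + k by ring]; omega
    have heven := ih (r + k - j) (by omega)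
    have hk := hG.move_le hkS (Nat.le_add_left k ((r + k - j) + 2 * i * k))
    rw [Nat.add_sub_cancel, ← hodd] at hk
    push_cast [show j ≤ r + k by omega] at heven
    linarith

end IsOptimalNetScore

theorem stmt_2_general (S : Finset ℕ) (hS : S.Nonempty) (hpos : ∀ j ∈ S, 0 < j)
    (k : ℕ) (hk : k = S.max' hS)
    (Gs : ℕ → ℤ) (h0 : Gs 0 = 0)
    (hG : ∀ n : ℕ, 0 < n →
      Gs n = if h : (S.filter (fun j => j ≤ n)).Nonempty
        then (S.filter (fun j => j ≤ n)).sup' h (fun j => (j : ℤ) - Gs (n - j))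
        else 0) :
    ∀ r : ℕ, r ≤ k → ∀ i : ℕ, Gs (r + 2 * i * k) ≤ (r : ℤ) := by
  have hkS : k ∈ S := hk ▸ S.max'_mem hS
  have hmax : ∀ j ∈ S, j ≤ k := fun j hj => hk ▸ S.le_max' j hj
  intro r hr i
  exact (IsOptimalNetScore.mk h0 hG).apply_add_two_mul_mul_le hpos hkS hmax i r hr

theorem stmt_2 (S : Finset ℕ) (hS : S.Nonempty) (hpos : ∀ j ∈ S, 0 < j)
    (k : ℕ) (hk : k = S.max' hS)
    (Gs : ℕ → ℤ) (h0 : Gs 0 = 0)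
    (hG : ∀ n : ℕ, 0 < n →
      Gs n = if h : (S.filter (fun j => j ≤ n)).Nonempty
        then (S.filter (fun j => j ≤ n)).sup' h (fun j => (j : ℤ) - Gs (n - j))
        else 0) (hkS : k ∈ S) :
    ∀ r : ℕ, r ≤ k → ∀ i : ℕ, Gs (r + 2 * i * k) ≤ (r : ℤ) :=
  stmt_2_general S hS hpos k hk Gs h0 hG
end

section
/- Let S be a finite nonempty set of positive integers with k = max S ∈ S, and define G_s : ℕ → ℤ by G_s(0) = 0 and G_s(n) = max_{j ∈ S, j ≤ n} (j - G_s(n - j)) for n > 0 (G_s(n) = 0 if no such j exists). Then for every s ∈ S, G_s(s + k) = k - s. -/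
/-!
Every value `G n` lies between `0` and the largest move available at `n`: the upper bound holds
because each option `j - G (n - j)` is at most `j`, and the lower bound because taking the largest
move `t` leaves the opponent at most `t`. Hence `G m ≤ m`. At `s + k`, taking `k` gives at least
`k - G s ≥ k - s`; conversely after any first move `j` the opponent may take `s`, which yields
`G (s + (k - j)) ≥ s - G (k - j) ≥ s - (k - j)`, so no first move beats `k - s`.
-/

open Finset

def IsOptimalNetScore_s5 (S : Finset ℕ) (G : ℕ → ℤ) : Prop :=
  G 0 = 0 ∧ ∀ n : ℕ, 0 < n →
    G n = if h : (S.filter (fun j => j ≤ n)).Nonempty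
      then (S.filter (fun j => j ≤ n)).sup' h (fun j => (j : ℤ) - G (n - j))
      else 0

namespace IsOptimalNetScore_s5

variable {S : Finset ℕ} {G : ℕ → ℤ}

theorem apply_eq (hG : IsOptimalNetScore_s5 S G) (hpos : ∀ j ∈ S, 0 < j) (n : ℕ) :
    G n = if h : (S.filter (fun j => j ≤ n)).Nonempty
      then (S.filter (fun j => j ≤ n)).sup' h (fun j => (j : ℤ) - G (n - j))
      else 0 := by
  rcases Nat.eq_zero_or_pos n with rfl | hn
  · have hempty : ¬(S.filter (fun j => j ≤ 0)).Nonempty := by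
      rintro ⟨j, hj⟩
      obtain ⟨hjS, hj0⟩ := mem_filter.1 hj
      exact (hpos j hjS).ne' (Nat.le_zero.1 hj0)
    rw [dif_neg hempty, hG.1]
  · exact hG.2 n hn

theorem sub_le_of_mem (hG : IsOptimalNetScore_s5 S G) {n j : ℕ} (hj : j ∈ S) (hjn : j ≤ n)
    (hn : 0 < n) : (j : ℤ) - G (n - j) ≤ G n := by
  have hmem : j ∈ S.filter (fun j => j ≤ n) := mem_filter.2 ⟨hj, hjn⟩
  rw [hG.2 n hn, dif_pos ⟨j, hmem⟩]
  exact le_sup' (fun j : ℕ => (j : ℤ) - G (n - j)) hmem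

theorem nonneg_and_le_of_forall_move_le (hG : IsOptimalNetScore_s5 S G) (hpos : ∀ j ∈ S, 0 < j)
    (n : ℕ) : 0 ≤ G n ∧ ∀ t : ℕ, (∀ j ∈ S, j ≤ n → j ≤ t) → G n ≤ t := by
  induction n using Nat.strong_induction_on with
  | _ n ih =>
  rw [hG.apply_eq hpos n]
  split_ifs with hmoves
  · refine ⟨?_, fun t ht => sup'_le _ _ fun j hj => ?_⟩
    · set t := (S.filter (fun j => j ≤ n)).max' hmoves
      obtain ⟨htS, htn⟩ := mem_filter.1 (max'_mem _ hmoves)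
      have hnt : n - t < n := Nat.sub_lt (lt_of_lt_of_le (hpos t htS) htn) (hpos t htS)
      have hreply : G (n - t) ≤ t := (ih _ hnt).2 t fun j hj hjnt =>
        le_max' (S.filter (· ≤ n)) j (mem_filter.2 ⟨hj, hjnt.trans (Nat.sub_le n t)⟩)
      exact (sub_nonneg.2 hreply).trans
        (le_sup' (fun j : ℕ => (j : ℤ) - G (n - j)) (max'_mem _ hmoves))
    · obtain ⟨hjS, hjn⟩ := mem_filter.1 hj
      have hnj : n - j < n := Nat.sub_lt (lt_of_lt_of_le (hpos j hjS) hjn) (hpos j hjS)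
      have hjt : (j : ℤ) ≤ t := by exact_mod_cast ht j hjS hjn
      linarith [(ih _ hnj).1]
  · exact ⟨le_rfl, fun _ _ => Int.natCast_nonneg _⟩

theorem le_self (hG : IsOptimalNetScore_s5 S G) (hpos : ∀ j ∈ S, 0 < j) (n : ℕ) : G n ≤ n :=
  (hG.nonneg_and_le_of_forall_move_le hpos n).2 n fun _ _ hjn => hjn

end IsOptimalNetScore_s5

theorem stmt_5_general (S : Finset ℕ) (hS : S.Nonempty) (hpos : ∀ j ∈ S, 0 < j)
    (k : ℕ) (hk : k = S.max' hS)
    (Gs : ℕ → ℤ) (h0 : Gs 0 = 0)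
    (hG : ∀ n : ℕ, 0 < n →
      Gs n = if h : (S.filter (fun j => j ≤ n)).Nonempty
        then (S.filter (fun j => j ≤ n)).sup' h (fun j => (j : ℤ) - Gs (n - j))
        else 0) :
    ∀ s ∈ S, Gs (s + k) = (k : ℤ) - (s : ℤ) := by
  have hGs : IsOptimalNetScore_s5 S Gs := ⟨h0, hG⟩
  intro s hs
  have hkS : k ∈ S := hk ▸ S.max'_mem hS
  have hkmem : k ∈ S.filter (fun j => j ≤ s + k) := mem_filter.2 ⟨hkS, Nat.le_add_left k s⟩
  rw [hG _ (Nat.add_pos_left (hpos s hs) k), dif_pos ⟨k, hkmem⟩]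
  refine le_antisymm (sup'_le _ _ fun j hj => ?_) ?_
  · have hjk : j ≤ k := hk ▸ le_max' S j (mem_filter.1 hj).1
    have hreply := hGs.sub_le_of_mem hs (Nat.le_add_right s (k - j))
      (Nat.add_pos_left (hpos s hs) _)
    rw [Nat.add_sub_cancel_left, ← Nat.add_sub_assoc hjk] at hreply
    have hrest := hGs.le_self hpos (k - j)
    push_cast [hjk] at hrest
    linarith
  · have hfirst := le_sup' (fun j : ℕ => (j : ℤ) - Gs (s + k - j)) hkmem
    rw [Nat.add_sub_cancel] at hfirst
    linarith [hGs.le_self hpos s]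

theorem stmt_5 (S : Finset ℕ) (hS : S.Nonempty) (hpos : ∀ j ∈ S, 0 < j)
    (k : ℕ) (hk : k = S.max' hS)
    (Gs : ℕ → ℤ) (h0 : Gs 0 = 0)
    (hG : ∀ n : ℕ, 0 < n →
      Gs n = if h : (S.filter (fun j => j ≤ n)).Nonempty
        then (S.filter (fun j => j ≤ n)).sup' h (fun j => (j : ℤ) - Gs (n - j))
        else 0) (hkS : k ∈ S) :
    ∀ s ∈ S, Gs (s + k) = (k : ℤ) - (s : ℤ) :=
  stmt_5_general S hS hpos k hk Gs h0 hG
end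

section
/- Let S be a finite nonempty set of positive integers with k = max S ∈ S, and define G_s : ℕ → ℤ by G_s(0) = 0 and G_s(n) = max_{j ∈ S, j ≤ n} (j - G_s(n - j)) for n > 0 (G_s(n) = 0 if no such j exists). Then for every s ∈ S and every i ∈ ℕ, G_s(s + 2ik) = s and G_s(s + (2i + 1)k) = k - s. -/
/-!
Write `G` for the value function. Each move `j` gives `G n ≥ j - G (n - j)`, and `G n` is at
most any nonnegative bound on `j - G (n - j)` over the legal moves; hence `0 ≤ G n ≤ n`. By
induction on `i`, with `s ∈ S` and an overshoot `d`,

* `G (s + 2ik + d) ≥ s - d`: move `s` when `i = 0`, otherwise move `k` to `s + (2i - 1)k + d`;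
* `G (s + (2i+1)k + d) ≤ k - s + d`: every move `j ≤ k` lands on `s + 2ik + (k - j + d)`.

At `d = 0` these are one half of each claimed value; the other half is the same pair of bounds
read with `k` in place of `s` and overshoot `s`.
-/

def IsScoringValue (S : Finset ℕ) (G : ℕ → ℤ) : Prop :=
  G 0 = 0 ∧ ∀ n : ℕ, 0 < n →
    G n = if h : (S.filter (fun j => j ≤ n)).Nonempty
      then (S.filter (fun j => j ≤ n)).sup' h (fun j => (j : ℤ) - G (n - j))
      else 0

namespace IsScoringValue

variable {S : Finset ℕ} {G : ℕ → ℤ}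

theorem sub_le (hG : IsScoringValue S G) {n j : ℕ} (hj : j ∈ S) (hjn : j ≤ n) :
    (j : ℤ) - G (n - j) ≤ G n := by
  rcases Nat.eq_zero_or_pos n with rfl | hn
  · obtain rfl : j = 0 := by omega
    simp [hG.1]
  have hmem : j ∈ S.filter (fun j => j ≤ n) := Finset.mem_filter.2 ⟨hj, hjn⟩
  rw [hG.2 n hn, dif_pos ⟨j, hmem⟩]
  exact Finset.le_sup' (fun j : ℕ => (j : ℤ) - G (n - j)) hmem

theorem le_of_forall_sub_le (hG : IsScoringValue S G) {n : ℕ} {c : ℤ} (hc : 0 ≤ c)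
    (h : ∀ j ∈ S, j ≤ n → (j : ℤ) - G (n - j) ≤ c) : G n ≤ c := by
  rcases Nat.eq_zero_or_pos n with rfl | hn
  · rwa [hG.1]
  rw [hG.2 n hn]
  split_ifs
  · exact Finset.sup'_le _ _ fun j hj => (Finset.mem_filter.1 hj).elim (h j)
  · exact hc

theorem le_of_forall_move_le (hG : IsScoringValue S G) {n b : ℕ}
    (hnonneg : ∀ j ∈ S, j ≤ n → 0 ≤ G (n - j)) (hb : ∀ j ∈ S, j ≤ n → j ≤ b) : G n ≤ b :=
  hG.le_of_forall_sub_le (Nat.cast_nonneg b) fun j hj hjn => by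
    have := hnonneg j hj hjn
    have := hb j hj hjn
    omega

theorem nonneg (hG : IsScoringValue S G) (hpos : ∀ j ∈ S, 0 < j) (n : ℕ) : 0 ≤ G n := by
  induction n using Nat.strong_induction_on with
  | _ n ih =>
    by_cases hmove : (S.filter (fun j => j ≤ n)).Nonempty
    · -- the largest legal move `j` leaves a position whose moves are all at most `j`
      obtain ⟨hjS, hjn⟩ := Finset.mem_filter.1 ((S.filter (fun j => j ≤ n)).max'_mem hmove)
      set j := (S.filter (fun j => j ≤ n)).max' hmove
      have hj := hpos j hjS
      have hrest : G (n - j) ≤ j :=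
        hG.le_of_forall_move_le (fun i hi _ => ih _ (by have := hpos i hi; omega))
          fun i hi hin => Finset.le_max' _ i (Finset.mem_filter.2 ⟨hi, by omega⟩)
      have := hG.sub_le hjS hjn
      omega
    · rcases Nat.eq_zero_or_pos n with rfl | hn
      · exact hG.1.ge
      · rw [hG.2 n hn, dif_neg hmove]

theorem le_self (hG : IsScoringValue S G) (hpos : ∀ j ∈ S, 0 < j) (n : ℕ) : G n ≤ n :=
  hG.le_of_forall_move_le (fun _ _ _ => hG.nonneg hpos _) fun _ _ h => h

variable {k : ℕ}

theorem apply_add_odd_le_of_even (hG : IsScoringValue S G) (hmax : ∀ j ∈ S, j ≤ k) {i : ℕ}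
    (heven : ∀ s ∈ S, ∀ d : ℕ, (s : ℤ) - d ≤ G (s + 2 * i * k + d))
    {s : ℕ} (hs : s ∈ S) (d : ℕ) : G (s + (2 * i + 1) * k + d) ≤ k - s + d := by
  have hsk := hmax s hs
  refine hG.le_of_forall_sub_le (by omega) fun j hj hjn => ?_
  have hjk := hmax j hj
  have hlands : s + (2 * i + 1) * k + d - j = s + 2 * i * k + (k - j + d) := by
    rw [add_mul, one_mul]; omega
  have := heven s hs (k - j + d)
  rw [hlands]
  push_cast [hjk] at this ⊢
  omega

theorem sub_le_apply_add_even (hG : IsScoringValue S G) (hpos : ∀ j ∈ S, 0 < j)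
    (hkS : k ∈ S) (hmax : ∀ j ∈ S, j ≤ k) (i : ℕ) {s : ℕ} (hs : s ∈ S) (d : ℕ) :
    (s : ℤ) - d ≤ G (s + 2 * i * k + d) := by
  induction i generalizing s d with
  | zero =>
    have hmove := hG.sub_le (n := s + d) hs (Nat.le_add_right s d)
    rw [Nat.add_sub_cancel_left] at hmove
    have := hG.le_self hpos d
    rw [mul_zero, zero_mul, add_zero]
    omega
  | succ i ih =>
    have hodd := hG.apply_add_odd_le_of_even hmax (fun s hs d => ih hs d) hs d
    have hlands : s + 2 * (i + 1) * k + d - k = s + (2 * i + 1) * k + d := by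
      rw [mul_add, add_mul, add_mul, mul_one, one_mul]; omega
    have := hG.sub_le (n := s + 2 * (i + 1) * k + d) hkS
      (by rw [mul_add, add_mul, mul_one]; omega)
    rw [hlands] at this
    omega

theorem apply_add_odd_le (hG : IsScoringValue S G) (hpos : ∀ j ∈ S, 0 < j)
    (hkS : k ∈ S) (hmax : ∀ j ∈ S, j ≤ k) (i : ℕ) {s : ℕ} (hs : s ∈ S) (d : ℕ) :
    G (s + (2 * i + 1) * k + d) ≤ k - s + d :=
  hG.apply_add_odd_le_of_even hmax
    (fun _ hs => hG.sub_le_apply_add_even hpos hkS hmax i hs) hs d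

theorem apply_add_even (hG : IsScoringValue S G) (hpos : ∀ j ∈ S, 0 < j)
    (hkS : k ∈ S) (hmax : ∀ j ∈ S, j ≤ k) (i : ℕ) {s : ℕ} (hs : s ∈ S) :
    G (s + 2 * i * k) = s := by
  refine le_antisymm ?_ (by simpa using hG.sub_le_apply_add_even hpos hkS hmax i hs 0)
  cases i with
  | zero => simpa using hG.le_self hpos s
  | succ i =>
    have := hG.apply_add_odd_le hpos hkS hmax i hkS s
    rw [show k + (2 * i + 1) * k + s = s + 2 * (i + 1) * k by ring] at this
    simpa using this

theorem apply_add_odd (hG : IsScoringValue S G) (hpos : ∀ j ∈ S, 0 < j)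
    (hkS : k ∈ S) (hmax : ∀ j ∈ S, j ≤ k) (i : ℕ) {s : ℕ} (hs : s ∈ S) :
    G (s + (2 * i + 1) * k) = k - s := by
  refine le_antisymm (by simpa using hG.apply_add_odd_le hpos hkS hmax i hs 0) ?_
  have := hG.sub_le_apply_add_even hpos hkS hmax i hkS s
  rwa [show k + 2 * i * k + s = s + (2 * i + 1) * k by ring] at this

end IsScoringValue

theorem stmt_6_general (S : Finset ℕ) (hS : S.Nonempty) (hpos : ∀ j ∈ S, 0 < j)
    (k : ℕ) (hk : k = S.max' hS)
    (Gs : ℕ → ℤ) (h0 : Gs 0 = 0)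
    (hG : ∀ n : ℕ, 0 < n →
      Gs n = if h : (S.filter (fun j => j ≤ n)).Nonempty
        then (S.filter (fun j => j ≤ n)).sup' h (fun j => (j : ℤ) - Gs (n - j))
        else 0) :
    ∀ s ∈ S, ∀ i : ℕ, Gs (s + 2 * i * k) = (s : ℤ) ∧ Gs (s + (2 * i + 1) * k) = (k : ℤ) - (s : ℤ) := by
  have hvalue : IsScoringValue S Gs := ⟨h0, hG⟩
  have hkS : k ∈ S := hk ▸ S.max'_mem hS
  have hmax : ∀ j ∈ S, j ≤ k := fun j hj => hk ▸ S.le_max' j hj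
  intro s hs i
  exact ⟨hvalue.apply_add_even hpos hkS hmax i hs, hvalue.apply_add_odd hpos hkS hmax i hs⟩

theorem stmt_6 (S : Finset ℕ) (hS : S.Nonempty) (hpos : ∀ j ∈ S, 0 < j)
    (k : ℕ) (hk : k = S.max' hS)
    (Gs : ℕ → ℤ) (h0 : Gs 0 = 0)
    (hG : ∀ n : ℕ, 0 < n →
      Gs n = if h : (S.filter (fun j => j ≤ n)).Nonempty
        then (S.filter (fun j => j ≤ n)).sup' h (fun j => (j : ℤ) - Gs (n - j))
        else 0) (hkS : k ∈ S) :
    ∀ s ∈ S, ∀ i : ℕ, Gs (s + 2 * i * k) = (s : ℤ) ∧ Gs (s + (2 * i + 1) * k) = (k : ℤ) - (s : ℤ) :=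
  stmt_6_general S hS hpos k hk Gs h0 hG
end

section
/- Define G_s : ℕ → ℤ by G_s(0) = 0 and, for n > 0, G_s(n) = max over j ∈ {4,5} with j ≤ n of (j - G_s(n - j)), with G_s(n) = 0 if no such j exists. Then 4 - G_s(13 - 4) > 5 - G_s(13 - 5); that is, in the subtraction game with set {4,5} and heap 13, removing 4 beans is strictly better than greedily removing 5 beans. -/
/-!
Unfolding the recursion gives `G_s 1 = G_s 3 = 0`, `G_s 4 = 4`, `G_s 5 = 5`, `G_s 8 = 5` and
`G_s 9 = 1`. From the heap of 13, taking 5 leaves the opponent the heap 8, worth 5 to them, while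
taking 4 leaves the heap 9, worth only 1: so `4 - 1 = 3 > 0 = 5 - 5`.
-/

/-- The optimal-score recursion of the scoring subtraction game with subtraction set `{4, 5}`. -/
def IsScoreRec45 (Gs : ℕ → ℤ) : Prop :=
  ∀ n : ℕ, 0 < n →
    Gs n = if h : (({4, 5} : Finset ℕ).filter (fun j => j ≤ n)).Nonempty
      then (({4, 5} : Finset ℕ).filter (fun j => j ≤ n)).sup' h (fun j => (j : ℤ) - Gs (n - j))
      else 0

namespace IsScoreRec45

variable {Gs : ℕ → ℤ}

theorem eq_zero_of_lt_four (hG : IsScoreRec45 Gs) {n : ℕ} (hn₀ : 0 < n) (hn : n < 4) :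
    Gs n = 0 := by
  have hempty : (({4, 5} : Finset ℕ).filter (fun j => j ≤ n)) = ∅ := by
    rw [Finset.filter_eq_empty_iff]
    simp only [Finset.mem_insert, Finset.mem_singleton]
    omega
  simpa [hempty] using hG n hn₀

theorem four (hG : IsScoreRec45 Gs) : Gs 4 = 4 - Gs 0 := by
  have hmoves : (({4, 5} : Finset ℕ).filter (fun j => j ≤ 4)) = {4} := by decide
  simpa [hmoves] using hG 4 (by norm_num)

theorem of_five_le (hG : IsScoreRec45 Gs) {n : ℕ} (hn : 5 ≤ n) :
    Gs n = max (4 - Gs (n - 4)) (5 - Gs (n - 5)) := by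
  have hmoves : (({4, 5} : Finset ℕ).filter (fun j => j ≤ n)) = {4, 5} := by
    rw [Finset.filter_true_of_mem]
    simp only [Finset.mem_insert, Finset.mem_singleton]
    omega
  simpa [hmoves, Finset.sup'_insert] using hG n (by omega)

end IsScoreRec45

theorem stmt_9 (Gs : ℕ → ℤ) (h0 : Gs 0 = 0)
    (hG : ∀ n : ℕ, 0 < n →
      Gs n = if h : (({4, 5} : Finset ℕ).filter (fun j => j ≤ n)).Nonempty
        then (({4, 5} : Finset ℕ).filter (fun j => j ≤ n)).sup' h (fun j => (j : ℤ) - Gs (n - j))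
        else 0) :
    (4 : ℤ) - Gs (13 - 4) > (5 : ℤ) - Gs (13 - 5) := by
  have hG : IsScoreRec45 Gs := hG
  have h1 : Gs 1 = 0 := hG.eq_zero_of_lt_four (by norm_num) (by norm_num)
  have h3 : Gs 3 = 0 := hG.eq_zero_of_lt_four (by norm_num) (by norm_num)
  have h4 : Gs 4 = 4 := by rw [hG.four, h0]; rfl
  have h5 : Gs 5 = 5 := by rw [hG.of_five_le le_rfl, h0, h1]; rfl
  have h8 : Gs 8 = 5 := by rw [hG.of_five_le (by norm_num), h4, h3]; rfl
  have h9 : Gs 9 = 1 := by rw [hG.of_five_le (by norm_num), h5, h4]; rfl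
  rw [h8, h9]
  norm_num
end

section
/- Let S be a finite nonempty set of positive integers and let p : S → ℤ be any score function. Define G_s : ℕ → ℤ by G_s(0) = 0 and, for n > 0, G_s(n) = max over j ∈ S with j ≤ n of (p(j) - G_s(n - j)) (with G_s(n) = 0 if no j ∈ S satisfies j ≤ n). Then G_s is eventually periodic: there exist N ∈ ℕ and a period t ≥ 1 such that G_s(n + t) = G_s(n) for all n ≥ N. -/
/-!
Once `n` exceeds every move, `G n` is determined by the preceding window of values. The function
is bounded: above, because the second player can copy the first player's move `j`, which gives
`G n ≤ G (n - 2 * j)`; below, since every move scores at least `min p` minus the upper bound.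
Hence only finitely many windows occur, two of them coincide, and from there on the sequence
repeats.
-/

open Finset

def EventuallyPeriodic {α : Type*} (f : ℕ → α) : Prop :=
  ∃ N t : ℕ, 1 ≤ t ∧ ∀ n : ℕ, N ≤ n → f (n + t) = f n

theorem EventuallyPeriodic.of_finite_range_of_window {α : Type*} {f : ℕ → α}
    (hf : (Set.range f).Finite) (K : ℕ)
    (hdet : ∀ m n, K ≤ m → K ≤ n → (∀ i, 1 ≤ i → i ≤ K → f (m - i) = f (n - i)) → f m = f n) :
    EventuallyPeriodic f := by
  have := hf.to_subtype
  obtain ⟨x, y, hxy, hw⟩ := Finite.exists_ne_map_eq_of_infinite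
    fun n (i : Fin K) => (⟨f (n + i), n + i, rfl⟩ : Set.range f)
  wlog hlt : x < y generalizing x y
  · exact this y x hxy.symm hw.symm (by omega)
  have hwin : ∀ i < K, f (x + i) = f (y + i) := fun i hi =>
    congrArg Subtype.val (congrFun hw ⟨i, hi⟩)
  refine ⟨x, y - x, by omega, fun n hn => ?_⟩
  induction n using Nat.strong_induction_on with
  | _ n ih =>
    by_cases hnK : n < x + K
    · have h := hwin (n - x) (by omega)
      rwa [show x + (n - x) = n by omega, show y + (n - x) = n + (y - x) by omega, eq_comm] at h
    · refine hdet _ _ (by omega) (by omega) fun i hi1 hiK => ?_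
      rw [show n + (y - x) - i = n - i + (y - x) by omega]
      exact ih (n - i) (by omega) (by omega)

def ScoreRecursion (S : Finset ℕ) (p : ℕ → ℤ) (G : ℕ → ℤ) : Prop :=
  ∀ n : ℕ, 0 < n →
    G n = if h : (S.filter (fun j => j ≤ n)).Nonempty
      then (S.filter (fun j => j ≤ n)).sup' h (fun j => p j - G (n - j))
      else 0

namespace ScoreRecursion

variable {S : Finset ℕ} {p : ℕ → ℤ} {G : ℕ → ℤ}

theorem sub_le (hG : ScoreRecursion S p G) {n j : ℕ} (hn : 0 < n) (hj : j ∈ S) (hjn : j ≤ n) :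
    p j - G (n - j) ≤ G n := by
  have hmem : j ∈ S.filter (fun j => j ≤ n) := mem_filter.2 ⟨hj, hjn⟩
  rw [hG n hn, dif_pos ⟨j, hmem⟩]
  exact le_sup' (fun j => p j - G (n - j)) hmem

theorem eq_of_forall_le (hG : ScoreRecursion S p G) {n : ℕ} (hn : 0 < n)
    (hSn : ∀ j ∈ S, j ≤ n) :
    G n = if h : S.Nonempty then S.sup' h (fun j => p j - G (n - j)) else 0 := by
  rw [hG n hn, filter_true_of_mem hSn]

theorem exists_eq_sub (hG : ScoreRecursion S p G) (hS : S.Nonempty) {n : ℕ} (hn : 0 < n)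
    (hSn : ∀ j ∈ S, j ≤ n) : ∃ j ∈ S, G n = p j - G (n - j) := by
  obtain ⟨j, hj, hje⟩ := exists_mem_eq_sup' hS (fun j => p j - G (n - j))
  exact ⟨j, hj, by rw [hG.eq_of_forall_le hn hSn, dif_pos hS, hje]⟩

theorem le_sub_two_mul (hG : ScoreRecursion S p G) {n j : ℕ} (hj : j ∈ S) (hj0 : 0 < j)
    (hjn : 2 * j ≤ n) (hGn : G n = p j - G (n - j)) : G n ≤ G (n - 2 * j) := by
  have h := hG.sub_le (n := n - j) (by omega) hj (by omega)
  rw [show n - j - j = n - 2 * j by omega] at h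
  omega

theorem exists_lt_two_mul_le (hG : ScoreRecursion S p G) (hS : S.Nonempty)
    (hpos : ∀ j ∈ S, 0 < j) {K : ℕ} (hK : ∀ j ∈ S, j < K) (n : ℕ) :
    ∃ m < 2 * K, G n ≤ G m := by
  induction n using Nat.strong_induction_on with
  | _ n ih =>
    by_cases hn : n < 2 * K
    · exact ⟨n, hn, le_rfl⟩
    have hSn : ∀ j ∈ S, j ≤ n := fun j hj => by have := hK j hj; omega
    have hn0 : 0 < n := by obtain ⟨a, ha⟩ := hS; have := hK a ha; have := hpos a ha; omega
    obtain ⟨j, hj, hGn⟩ := hG.exists_eq_sub hS hn0 hSn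
    have hj0 := hpos j hj
    have hjK := hK j hj
    obtain ⟨m, hm, hle⟩ := ih (n - 2 * j) (by omega)
    exact ⟨m, hm, (hG.le_sub_two_mul hj hj0 (by omega) hGn).trans hle⟩

theorem bddAbove_range (hG : ScoreRecursion S p G) (hS : S.Nonempty)
    (hpos : ∀ j ∈ S, 0 < j) {K : ℕ} (hK : ∀ j ∈ S, j < K) : BddAbove (Set.range G) := by
  obtain ⟨U, hU⟩ := ((Set.finite_Iio (2 * K)).image G).bddAbove
  refine ⟨U, ?_⟩
  rintro _ ⟨n, rfl⟩
  obtain ⟨m, hm, hle⟩ := hG.exists_lt_two_mul_le hS hpos hK n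
  exact hle.trans (hU ⟨m, hm, rfl⟩)

theorem bddBelow_range (hG : ScoreRecursion S p G) (hS : S.Nonempty)
    (hbdd : BddAbove (Set.range G)) : BddBelow (Set.range G) := by
  obtain ⟨U, hU⟩ := hbdd
  refine ⟨min (G 0) (min 0 (S.inf' hS p - U)), ?_⟩
  rintro _ ⟨n, rfl⟩
  rcases Nat.eq_zero_or_pos n with rfl | hn
  · exact min_le_left _ _
  refine (min_le_right _ _).trans ?_
  rw [hG n hn]
  split_ifs with hne
  · obtain ⟨j, hjmem⟩ := hne
    calc min 0 (S.inf' hS p - U)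
        ≤ S.inf' hS p - U := min_le_right _ _
      _ ≤ p j - G (n - j) :=
          sub_le_sub (inf'_le p (mem_filter.1 hjmem).1) (hU ⟨n - j, rfl⟩)
      _ ≤ _ := le_sup' (fun j => p j - G (n - j)) hjmem
  · exact min_le_left _ _

theorem eq_of_window (hG : ScoreRecursion S p G) (hpos : ∀ j ∈ S, 0 < j) {K : ℕ}
    (hK : ∀ j ∈ S, j < K) (hK0 : 0 < K) {m n : ℕ} (hm : K ≤ m) (hn : K ≤ n)
    (hwin : ∀ i, 1 ≤ i → i ≤ K → G (m - i) = G (n - i)) : G m = G n := by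
  rw [hG.eq_of_forall_le (by omega) fun j hj => (hK j hj).le.trans hm,
    hG.eq_of_forall_le (by omega) fun j hj => (hK j hj).le.trans hn]
  split_ifs with hS
  · exact sup'_congr hS rfl fun j hj => by
      rw [hwin j (hpos j hj) (hK j hj).le]
  · rfl

end ScoreRecursion

theorem stmt_11_general (S : Finset ℕ) (hS : S.Nonempty) (hpos : ∀ j ∈ S, 0 < j) (p : ℕ → ℤ)
    (Gs : ℕ → ℤ)
    (hG : ∀ n : ℕ, 0 < n →
      Gs n = if h : (S.filter (fun j => j ≤ n)).Nonempty
        then (S.filter (fun j => j ≤ n)).sup' h (fun j => p j - Gs (n - j))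
        else 0) :
    ∃ N t : ℕ, 1 ≤ t ∧ ∀ n : ℕ, N ≤ n → Gs (n + t) = Gs n := by
  have hG : ScoreRecursion S p Gs := hG
  have hK : ∀ j ∈ S, j < S.sup id + 1 := fun j hj => Nat.lt_succ_of_le (le_sup (f := id) hj)
  have hbdd := hG.bddAbove_range hS hpos hK
  exact EventuallyPeriodic.of_finite_range_of_window
    ((hG.bddBelow_range hS hbdd).finite_of_bddAbove hbdd) _
    fun _ _ hm hn => hG.eq_of_window hpos hK (Nat.succ_pos _) hm hn

theorem stmt_11 (S : Finset ℕ) (hS : S.Nonempty) (hpos : ∀ j ∈ S, 0 < j) (p : ℕ → ℤ)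
    (Gs : ℕ → ℤ) (h0 : Gs 0 = 0)
    (hG : ∀ n : ℕ, 0 < n →
      Gs n = if h : (S.filter (fun j => j ≤ n)).Nonempty
        then (S.filter (fun j => j ≤ n)).sup' h (fun j => p j - Gs (n - j))
        else 0) :
    ∃ N t : ℕ, 1 ≤ t ∧ ∀ n : ℕ, N ≤ n → Gs (n + t) = Gs n :=
  stmt_11_general S hS hpos p Gs hG
end
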